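/- arXiv:math/9702201 — 4 statements merged into one kernel-verified Lean document; each statement's English description precedes it below -/
import Mathlib

section
/- Let H₁, H₂, H₃ be complex Hilbert spaces and let A : H₁ → H₂ be a bounded linear operator. Suppose that for every ε > 0 there exist a compact linear operator B_ε : H₁ → H₃ and a constant C_ε > 0 such that ‖A f‖² ≤ ε ‖f‖² + C_ε ‖B_ε f‖² for all f ∈ H₁. Then A is a compact operator. -/
/-- If a bounded operator `A` between Hilbert spaces satisfies, for every `ε > 0`,
an estimate `‖A f‖² ≤ ε ‖f‖² + C_ε ‖B_ε f‖²` with `B_ε` compact, then `A` is compact. -/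
theorem compact_of_small_plus_compact_estimate
    {H₁ H₂ H₃ : Type*}
    [NormedAddCommGroup H₁] [InnerProductSpace ℂ H₁] [CompleteSpace H₁]
    [NormedAddCommGroup H₂] [InnerProductSpace ℂ H₂] [CompleteSpace H₂]
    [NormedAddCommGroup H₃] [InnerProductSpace ℂ H₃] [CompleteSpace H₃]
    (A : H₁ →L[ℂ] H₂)
    (h : ∀ ε : ℝ, 0 < ε → ∃ (B : H₁ →L[ℂ] H₃) (C : ℝ),
      IsCompactOperator B ∧ 0 < C ∧
      ∀ f : H₁, ‖A f‖ ^ 2 ≤ ε * ‖f‖ ^ 2 + C * ‖B f‖ ^ 2) :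
    IsCompactOperator A := by
  have key : IsCompactOperator (A : H₁ →ₗ[ℂ] H₂) := by
    rw [isCompactOperator_iff_isCompact_closure_image_ball (𝕜₁ := ℂ)
      (A : H₁ →ₗ[ℂ] H₂) (one_pos)]
    refine TotallyBounded.isCompact_of_isClosed ?_ isClosed_closure
    refine TotallyBounded.closure ?_
    rw [Metric.totallyBounded_iff]
    intro δ hδ
    -- pick ε and the corresponding compact operator B
    obtain ⟨B, C, hBcomp, hC, hest⟩ := h (δ ^ 2 / 16) (by positivity)
    -- B maps the unit ball into a totally bounded set
    have hTB : TotallyBounded ((B : H₁ → H₃) '' Metric.ball 0 1) := by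
      have := hBcomp.isCompact_closure_image_ball (𝕜₁ := ℂ) (f := (B : H₁ →ₗ[ℂ] H₃)) 1
      exact (this.totallyBounded).subset subset_closure
    set r : ℝ := Real.sqrt (δ ^ 2 / (16 * C)) with hr_def
    have hr : 0 < r := Real.sqrt_pos.mpr (by positivity)
    have hr2 : r ^ 2 = δ ^ 2 / (16 * C) := Real.sq_sqrt (by positivity)
    obtain ⟨t, hts, htf, htcover⟩ :=
      Metric.finite_approx_of_totallyBounded hTB r hr
    -- choose preimages for points of t
    choose g hg hBg using fun y : t => hts y.2
    haveI : Finite t := htf.to_subtype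
    refine ⟨Set.range (fun y : t => A (g y)), Set.finite_range _, ?_⟩
    rintro _ ⟨f, hf, rfl⟩
    have hBf : (B : H₁ → H₃) f ∈ ⋃ y ∈ t, Metric.ball y r :=
      htcover ⟨f, hf, rfl⟩
    simp only [Set.mem_iUnion, Metric.mem_ball] at hBf
    obtain ⟨y, hy, hdist⟩ := hBf
    refine Set.mem_iUnion₂.mpr ⟨A (g ⟨y, hy⟩), ⟨⟨y, hy⟩, rfl⟩, ?_⟩
    rw [Metric.mem_ball, dist_eq_norm]
    set z := g ⟨y, hy⟩
    have hz : z ∈ Metric.ball (0 : H₁) 1 := hg _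
    have hBz : B z = y := hBg _
    have h1 : ‖f - z‖ < 2 := by
      have hf' : ‖f‖ < 1 := by simpa using hf
      have hz' : ‖z‖ < 1 := by simpa using hz
      calc ‖f - z‖ ≤ ‖f‖ + ‖z‖ := norm_sub_le _ _
        _ < 2 := by linarith
    have h2 : ‖B f - B z‖ < r := by
      rw [hBz, ← dist_eq_norm]; exact hdist
    have hkey : ‖A f - A z‖ ^ 2 < δ ^ 2 := by
      have := hest (f - z)
      rw [map_sub, map_sub] at this
      have e1 : δ ^ 2 / 16 * ‖f - z‖ ^ 2 ≤ δ ^ 2 / 16 * 4 := by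
        have : ‖f - z‖ ^ 2 ≤ 4 := by nlinarith [norm_nonneg (f - z)]
        nlinarith
      have e2 : C * ‖B f - B z‖ ^ 2 ≤ C * r ^ 2 := by
        have : ‖B f - B z‖ ^ 2 ≤ r ^ 2 := by nlinarith [norm_nonneg (B f - B z)]
        nlinarith
      have e3 : C * r ^ 2 = δ ^ 2 / 16 := by
        rw [hr2]; field_simp
      nlinarith
    have := lt_of_pow_lt_pow_left₀ 2 (le_of_lt hδ) hkey
    simpa using this
  exact key
end

section
/- Let H and H' be complex Hilbert spaces, let N : H → H be a compact linear operator, and let A : H → H' be a bounded linear operator such that ‖A f‖² ≤ Re⟨f, N f⟩ for all f ∈ H. Then A is a compact operator. -/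
/-!
Applied to differences, the hypothesis gives `‖A f - A g‖² ≤ ‖f - g‖ ‖N f - N g‖`, so on the
unit ball `A` is uniformly controlled by `N`: a finite `ε²/2`-net for `N` of the unit ball
yields a finite `ε`-net for `A` of the unit ball. Hence `A` maps the unit ball to a totally
bounded set, whose closure is compact because `H'` is complete.
-/

open Metric Set

theorem TotallyBounded.image_of_forall_dist_lt {α β γ : Type*} [PseudoMetricSpace β]
    [PseudoMetricSpace γ] {f : α → β} {g : α → γ} {s : Set α} (hg : TotallyBounded (g '' s))
    (hfg : ∀ ε > 0, ∃ δ > 0, ∀ x ∈ s, ∀ y ∈ s, dist (g x) (g y) < δ → dist (f x) (f y) < ε) :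
    TotallyBounded (f '' s) := by
  rw [Metric.totallyBounded_iff]
  intro ε hε
  obtain ⟨δ, hδ, hδε⟩ := hfg ε hε
  obtain ⟨t, hts, htfin, hcover⟩ :=
    exists_subset_image_finite_and.mp (finite_approx_of_totallyBounded hg δ hδ)
  refine ⟨f '' t, htfin.image f, ?_⟩
  rintro _ ⟨x, hx, rfl⟩
  obtain ⟨_, ⟨y, hy, rfl⟩, hxy⟩ := mem_iUnion₂.mp (hcover (mem_image_of_mem g hx))
  exact mem_iUnion₂.mpr ⟨f y, mem_image_of_mem f hy, hδε x hx y (hts hy) hxy⟩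

theorem norm_sq_le_norm_mul_norm_of_sq_le_re_inner {𝕜 E F : Type*} [RCLike 𝕜]
    [SeminormedAddCommGroup E] [InnerProductSpace 𝕜 E] [SeminormedAddCommGroup F]
    {N : E → E} {A : E → F} (hA : ∀ f, ‖A f‖ ^ 2 ≤ RCLike.re (inner 𝕜 f (N f))) (f : E) :
    ‖A f‖ ^ 2 ≤ ‖f‖ * ‖N f‖ :=
  (hA f).trans ((RCLike.re_le_norm _).trans (norm_inner_le_norm _ _))

section

variable {𝕜 E F G : Type*} [NontriviallyNormedField 𝕜] [SeminormedAddCommGroup E]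
  [NormedSpace 𝕜 E] [SeminormedAddCommGroup F] [NormedSpace 𝕜 F] [SeminormedAddCommGroup G]
  [NormedSpace 𝕜 G] {N : E →L[𝕜] F} {A : E →L[𝕜] G}

theorem dist_sq_le_dist_mul_dist_of_norm_sq_le (hA : ∀ f, ‖A f‖ ^ 2 ≤ ‖f‖ * ‖N f‖) (f g : E) :
    dist (A f) (A g) ^ 2 ≤ dist f g * dist (N f) (N g) := by
  simpa only [dist_eq_norm, map_sub] using hA (f - g)

theorem totallyBounded_image_closedBall_of_norm_sq_le (hN : IsCompactOperator N)
    (hA : ∀ f, ‖A f‖ ^ 2 ≤ ‖f‖ * ‖N f‖) : TotallyBounded (A '' closedBall 0 1) := by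
  obtain ⟨K, hK, hNK⟩ := hN.image_closedBall_subset_compact 1
  refine TotallyBounded.image_of_forall_dist_lt (hK.totallyBounded.subset hNK) fun ε hε => ?_
  refine ⟨ε ^ 2 / 2, by positivity, fun x hx y hy (hxy : dist (N x) (N y) < _) => ?_⟩
  have hdist : dist x y ≤ 2 := by
    linarith [dist_triangle_right x y 0, mem_closedBall.mp hx, mem_closedBall.mp hy]
  refine lt_of_pow_lt_pow_left₀ 2 hε.le ?_
  calc dist (A x) (A y) ^ 2 ≤ dist x y * dist (N x) (N y) :=
        dist_sq_le_dist_mul_dist_of_norm_sq_le hA x y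
    _ ≤ 2 * dist (N x) (N y) := by gcongr
    _ < ε ^ 2 := by linarith

theorem IsCompactOperator.of_norm_sq_le [CompleteSpace G] (hN : IsCompactOperator N)
    (hA : ∀ f, ‖A f‖ ^ 2 ≤ ‖f‖ * ‖N f‖) : IsCompactOperator A :=
  (isCompactOperator_iff_exists_mem_nhds_image_subset_compact A).mpr
    ⟨closedBall 0 1, closedBall_mem_nhds 0 one_pos, closure (A '' closedBall 0 1),
      (totallyBounded_image_closedBall_of_norm_sq_le hN hA).closure.isCompact_of_isClosed
        isClosed_closure,
      subset_closure⟩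

end

theorem compact_of_sq_le_inner_compact_general
    {H H' : Type*}
    [NormedAddCommGroup H] [InnerProductSpace ℂ H]
    [NormedAddCommGroup H'] [InnerProductSpace ℂ H'] [CompleteSpace H']
    (N : H →L[ℂ] H) (A : H →L[ℂ] H')
    (hN : IsCompactOperator N)
    (hA : ∀ f : H, ‖A f‖ ^ 2 ≤ (inner ℂ f (N f) : ℂ).re) :
    IsCompactOperator A :=
  hN.of_norm_sq_le (norm_sq_le_norm_mul_norm_of_sq_le_re_inner (𝕜 := ℂ) hA)

/-- If `N` is a compact operator on a Hilbert space `H` and a bounded operator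
`A : H → H'` satisfies `‖A f‖² ≤ Re⟨f, N f⟩` for all `f`, then `A` is compact. -/
theorem compact_of_sq_le_inner_compact
    {H H' : Type*}
    [NormedAddCommGroup H] [InnerProductSpace ℂ H] [CompleteSpace H]
    [NormedAddCommGroup H'] [InnerProductSpace ℂ H'] [CompleteSpace H']
    (N : H →L[ℂ] H) (A : H →L[ℂ] H')
    (hN : IsCompactOperator N)
    (hA : ∀ f : H, ‖A f‖ ^ 2 ≤ (inner ℂ f (N f) : ℂ).re) :
    IsCompactOperator A :=
  compact_of_sq_le_inner_compact_general N A hN hA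
end

section
/- Let Ω ⊂ ℂⁿ be a nonempty bounded open circled set, let d ≥ 0, let I be the set of multi-indices of length d, and let E = (E_{μν})_{μ,ν ∈ I} be a Hermitian matrix of complex numbers. Suppose that for every nonzero homogeneous polynomial h of degree d, Re ∫_Ω ∫_Ω Σ_{μ,ν ∈ I} E_{μν} z^μ conj(ζ)^ν · h(ζ) · conj(h(z)) dV(ζ) dV(z) > 0. Then E is positive definite: Σ_{μ,ν ∈ I} E_{μν} w_μ conj(w_ν) > 0 for every nonzero w ∈ ℂ^I. -/
/-!
The monomials of degree `d` stay linearly independent as functions on the open set `Ω`, so their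
Gram matrix in `L²(Ω)` is positive definite, hence invertible. Therefore every `w ∈ ℂ^I` is the
moment vector `(∫_Ω z^μ conj h)_μ` of some homogeneous polynomial `h` of degree `d`, and `h ≠ 0`
when `w ≠ 0`. Expanding the kernel, the double integral in the hypothesis at this `h` is exactly
`Σ E_{μν} w_μ conj w_ν`.
-/

open MeasureTheory MvPolynomial Finset ComplexConjugate Matrix
open scoped ComplexOrder

attribute [local fun_prop] MvPolynomial.continuous_eval

section Integration

variable {X : Type*} [MeasurableSpace X] {μ : Measure X}

theorem Continuous.integrableOn_of_isBounded [MetricSpace X] [ProperSpace X]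
    [OpensMeasurableSpace X] [IsFiniteMeasureOnCompacts μ] {E : Type*} [NormedAddCommGroup E]
    {f : X → E} (hf : Continuous f) {s : Set X} (hs : Bornology.IsBounded s) :
    IntegrableOn f s μ :=
  (hf.continuousOn.integrableOn_compact hs.isCompact_closure).mono_set subset_closure

theorem setIntegral_sq_norm_pos [TopologicalSpace X] [OpensMeasurableSpace X]
    [μ.IsOpenPosMeasure] {E : Type*} [NormedAddCommGroup E] {f : X → E} (hf : Continuous f)
    {s : Set X} (hs : IsOpen s) (hint : IntegrableOn (fun x => ‖f x‖ ^ 2) s μ) {x₀ : X}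
    (hx₀ : x₀ ∈ s) (hfx₀ : f x₀ ≠ 0) :
    0 < ∫ x in s, ‖f x‖ ^ 2 ∂μ := by
  rw [setIntegral_pos_iff_support_of_nonneg_ae (.of_forall fun x => by positivity) hint]
  refine ((hs.inter (isOpen_compl_singleton.preimage hf)).measure_pos μ ⟨x₀, hx₀, hfx₀⟩).trans_le
    (measure_mono fun x ⟨hxs, hx⟩ => ⟨?_, hxs⟩)
  simpa using hx

end Integration

section GramMatrix

variable {X ι : Type*} [MeasurableSpace X]

noncomputable def gramMatrix (μ : Measure X) (f : ι → X → ℂ) : Matrix ι ι ℂ :=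
  Matrix.of fun i j => ∫ x, conj (f i x) * f j x ∂μ

variable {μ : Measure X} {f : ι → X → ℂ}

theorem gramMatrix_isHermitian : (gramMatrix μ f).IsHermitian := by
  ext i j
  simp only [gramMatrix, conjTranspose_apply, of_apply, Complex.star_def, ← integral_conj,
    map_mul, Complex.conj_conj, mul_comm]

variable [Fintype ι]

theorem gramMatrix_mulVec (hf : ∀ i j, Integrable (fun x => conj (f i x) * f j x) μ)
    (c : ι → ℂ) (i : ι) :
    (gramMatrix μ f *ᵥ c) i = ∫ x, conj (f i x) * ∑ j, c j * f j x ∂μ := by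
  simp only [mulVec, dotProduct, gramMatrix, of_apply, Finset.mul_sum,
    mul_left_comm (conj (f i _)) (c _)]
  rw [integral_finsetSum _ fun j _ => (hf i j).const_mul (c j)]
  simp only [integral_const_mul, mul_comm]

theorem star_dotProduct_gramMatrix_mulVec
    (hf : ∀ i j, Integrable (fun x => conj (f i x) * f j x) μ) (c : ι → ℂ) :
    star c ⬝ᵥ (gramMatrix μ f *ᵥ c) = ∫ x, ‖∑ i, c i * f i x‖ ^ 2 ∂μ := by
  have hint : ∀ i, Integrable (fun x => conj (c i) * (conj (f i x) * ∑ j, c j * f j x)) μ := by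
    intro i
    simp_rw [Finset.mul_sum, mul_left_comm _ (c _)]
    exact integrable_finsetSum _ fun j _ => ((hf i j).const_mul _).const_mul _
  simp only [dotProduct, gramMatrix_mulVec hf, Pi.star_apply, Complex.star_def,
    ← integral_const_mul]
  rw [← integral_finsetSum _ fun i _ => hint i, ← integral_complex_ofReal]
  congr with x
  rw [Complex.ofReal_pow, ← Complex.mul_conj', mul_comm, map_sum, Finset.sum_mul]
  simp only [map_mul, mul_assoc]

theorem gramMatrix_posDef (hf : ∀ i j, Integrable (fun x => conj (f i x) * f j x) μ)
    (hpos : ∀ c : ι → ℂ, c ≠ 0 → 0 < ∫ x, ‖∑ i, c i * f i x‖ ^ 2 ∂μ) : (gramMatrix μ f).PosDef :=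
  .of_dotProduct_mulVec_pos gramMatrix_isHermitian fun c hc => by
    rw [star_dotProduct_gramMatrix_mulVec hf]
    exact_mod_cast hpos c hc

theorem exists_integral_mul_conj_eq_of_posDef (hG : (gramMatrix μ f).PosDef)
    (hf : ∀ i j, Integrable (fun x => conj (f i x) * f j x) μ) (w : ι → ℂ) :
    ∃ c : ι → ℂ, ∀ i, ∫ x, f i x * conj (∑ j, c j * f j x) ∂μ = w i := by
  classical
  obtain ⟨c, hc⟩ := mulVec_surjective_iff_isUnit.mpr hG.isUnit (star w)
  refine ⟨c, fun i => ?_⟩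
  have hci := congr_fun hc i
  rw [gramMatrix_mulVec hf, Pi.star_apply, Complex.star_def] at hci
  rw [← Complex.conj_conj (w i), ← hci, ← integral_conj]
  simp only [map_mul, Complex.conj_conj]

end GramMatrix

section Kernel

variable {X ι κ : Type*} [MeasurableSpace X] {μ : Measure X}

theorem integral_sum_sum_const_mul (s : Finset ι) (t : Finset κ) (c : ι → κ → ℂ)
    {F : ι → κ → X → ℂ} (hF : ∀ i j, Integrable (F i j) μ) :
    ∫ x, ∑ i ∈ s, ∑ j ∈ t, c i j * F i j x ∂μ = ∑ i ∈ s, ∑ j ∈ t, c i j * ∫ x, F i j x ∂μ := by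
  rw [integral_finsetSum _ fun i _ => integrable_finsetSum _ fun j _ => (hF i j).const_mul _]
  refine sum_congr rfl fun i _ => ?_
  rw [integral_finsetSum _ fun j _ => (hF i j).const_mul _]
  simp only [integral_const_mul]

theorem integral_integral_kernel_mul_conj (s : Finset ι) (E : ι → ι → ℂ) (f : ι → X → ℂ)
    (g : X → ℂ) (hfg : ∀ i, Integrable (fun x => f i x * conj (g x)) μ) :
    ∫ x, ∫ y, (∑ i ∈ s, ∑ j ∈ s, E i j * f i x * conj (f j y)) * g y * conj (g x) ∂μ ∂μ =
      ∑ i ∈ s, ∑ j ∈ s,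
        E i j * (∫ x, f i x * conj (g x) ∂μ) * conj (∫ x, f j x * conj (g x) ∂μ) := by
  have hinner : ∀ x, ∫ y, (∑ i ∈ s, ∑ j ∈ s, E i j * f i x * conj (f j y)) * g y * conj (g x) ∂μ
      = ∑ i ∈ s, ∑ j ∈ s,
        (E i j * conj (∫ y, f j y * conj (g y) ∂μ)) * (f i x * conj (g x)) := by
    intro x
    have hexpand : ∀ y, (∑ i ∈ s, ∑ j ∈ s, E i j * f i x * conj (f j y)) * g y * conj (g x)
        = ∑ i ∈ s, ∑ j ∈ s, (E i j * (f i x * conj (g x))) * conj (f j y * conj (g y)) := by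
      intro y
      simp only [sum_mul, map_mul, Complex.conj_conj]
      exact sum_congr rfl fun i _ => sum_congr rfl fun j _ => by ring
    simp_rw [hexpand]
    rw [integral_sum_sum_const_mul (F := fun _ j y => conj (f j y * conj (g y))) _ _ _
      fun _ j => Complex.conjCLE.toContinuousLinearMap.integrable_comp (hfg j)]
    simp only [integral_conj]
    exact sum_congr rfl fun i _ => sum_congr rfl fun j _ => by ring
  simp_rw [hinner]
  rw [integral_sum_sum_const_mul (F := fun i _ x => f i x * conj (g x)) _ _ _ fun i _ => hfg i]
  exact sum_congr rfl fun i _ => sum_congr rfl fun j _ => by ring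

end Kernel

section Polynomial

variable {σ : Type*} [Fintype σ]

theorem MvPolynomial.exists_mem_eval_ne_zero {𝕜 : Type*} [RCLike 𝕜] {Ω : Set (σ → 𝕜)}
    (hΩ : IsOpen Ω) (hne : Ω.Nonempty) {p : MvPolynomial σ 𝕜} (hp : p ≠ 0) :
    ∃ z ∈ Ω, eval z p ≠ 0 := by
  by_contra! hzero
  obtain ⟨z₀, hz₀⟩ := hne
  have hglobal := (AnalyticOnNhd.eval_mvPolynomial p).eqOn_zero_of_preconnected_of_eventuallyEq_zero
    isPreconnected_univ (Set.mem_univ z₀) (Filter.eventually_of_mem (hΩ.mem_nhds hz₀) hzero)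
  exact hp (MvPolynomial.funext fun z => by simpa using hglobal (Set.mem_univ z))

theorem gramMatrix_eval_posDef {ι : Type*} [Fintype ι] {Ω : Set (σ → ℂ)} (hΩopen : IsOpen Ω)
    (hΩne : Ω.Nonempty) (hΩbdd : Bornology.IsBounded Ω) {p : ι → MvPolynomial σ ℂ}
    (hp : LinearIndependent ℂ p) :
    (gramMatrix (volume.restrict Ω) fun i z => eval z (p i)).PosDef := by
  refine gramMatrix_posDef (fun i j => (by fun_prop : Continuous _).integrableOn_of_isBounded hΩbdd)
    fun c hc => ?_
  have hq : ∑ i, c i • p i ≠ 0 := fun h => hc (funext (Fintype.linearIndependent_iff.mp hp c h))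
  obtain ⟨z₀, hz₀, hq₀⟩ := exists_mem_eval_ne_zero hΩopen hΩne hq
  have heval : ∀ z, eval z (∑ i, c i • p i) = ∑ i, c i * eval z (p i) := by simp [smul_eval]
  simp_rw [← heval]
  exact setIntegral_sq_norm_pos (continuous_eval _) hΩopen
    ((by fun_prop : Continuous _).integrableOn_of_isBounded hΩbdd) hz₀ hq₀

end Polynomial

theorem exists_mem_homogeneousSubmodule_integral_mul_conj_eq {n : ℕ}
    {Ω : Set (Fin n → ℂ)} (hΩopen : IsOpen Ω) (hΩne : Ω.Nonempty)
    (hΩbdd : Bornology.IsBounded Ω) (d : ℕ) (w : (Fin n → ℕ) → ℂ) :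
    ∃ h ∈ homogeneousSubmodule (Fin n) ℂ d, ∀ μ ∈ Nat.antidiagonalTuple n d,
      ∫ z in Ω, (∏ i, z i ^ μ i) * conj (eval z h) = w μ := by
  let p : Nat.antidiagonalTuple n d → MvPolynomial (Fin n) ℂ :=
    fun μ => monomial (Finsupp.equivFunOnFinite.symm μ) 1
  have hp : LinearIndependent ℂ p := by
    have := (basisMonomials (Fin n) ℂ).linearIndependent.comp
      (fun μ : Nat.antidiagonalTuple n d => Finsupp.equivFunOnFinite.symm μ.1)
      (Finsupp.equivFunOnFinite.symm.injective.comp Subtype.val_injective)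
    simpa [p, coe_basisMonomials, Function.comp_def] using this
  have heval : ∀ μ z, eval z (p μ) = ∏ i, z i ^ μ.1 i := by
    simp [p, eval_monomial, Finsupp.prod_fintype]
  have hint : ∀ μ ν, Integrable (fun z => conj (eval z (p μ)) * eval z (p ν)) (volume.restrict Ω) :=
    fun μ ν => (by fun_prop : Continuous _).integrableOn_of_isBounded hΩbdd
  obtain ⟨c, hc⟩ := exists_integral_mul_conj_eq_of_posDef
    (gramMatrix_eval_posDef hΩopen hΩne hΩbdd hp) hint fun μ => w μ
  refine ⟨∑ μ, c μ • p μ, sum_mem fun μ _ => Submodule.smul_mem _ _ ?_, fun μ hμ => ?_⟩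
  · rw [mem_homogeneousSubmodule]
    refine isHomogeneous_monomial _ ?_
    simpa [Finsupp.degree_eq_sum] using Nat.mem_antidiagonalTuple.mp μ.2
  · simpa [heval, smul_eval] using hc ⟨μ, hμ⟩

theorem posdef_operator_implies_posdef_matrix_general
    {n : ℕ} (Ω : Set (Fin n → ℂ))
    (hΩopen : IsOpen Ω) (hΩne : Ω.Nonempty) (hΩbdd : Bornology.IsBounded Ω)
    (d : ℕ) (E : (Fin n → ℕ) → (Fin n → ℕ) → ℂ)
    (hPos : ∀ h : MvPolynomial (Fin n) ℂ, h.IsHomogeneous d → h ≠ 0 →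
      0 < (∫ z in Ω, ∫ ζ in Ω,
        (∑ μ ∈ Finset.Nat.antidiagonalTuple n d, ∑ ν ∈ Finset.Nat.antidiagonalTuple n d,
          E μ ν * (∏ i, z i ^ μ i) * (starRingEnd ℂ) (∏ i, ζ i ^ ν i))
          * eval ζ h * (starRingEnd ℂ) (eval z h)).re) :
    ∀ w : (Fin n → ℕ) → ℂ, (∃ μ ∈ Finset.Nat.antidiagonalTuple n d, w μ ≠ 0) →
      0 < (∑ μ ∈ Finset.Nat.antidiagonalTuple n d, ∑ ν ∈ Finset.Nat.antidiagonalTuple n d,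
        E μ ν * w μ * (starRingEnd ℂ) (w ν)).re := by
  rintro w ⟨μ₀, hμ₀, hwμ₀⟩
  obtain ⟨h, hhom, hmoments⟩ :=
    exists_mem_homogeneousSubmodule_integral_mul_conj_eq hΩopen hΩne hΩbdd d w
  have hh : h ≠ 0 := by
    rintro rfl
    simp [← hmoments μ₀ hμ₀] at hwμ₀
  have hint : ∀ μ : Fin n → ℕ,
      IntegrableOn (fun z => (∏ i, z i ^ μ i) * conj (eval z h)) Ω := fun μ =>
    (by fun_prop : Continuous _).integrableOn_of_isBounded hΩbdd
  have hquad := hPos h hhom hh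
  rw [integral_integral_kernel_mul_conj _ E (fun μ z => ∏ i, z i ^ μ i) (eval · h) hint] at hquad
  refine hquad.trans_eq <| congrArg Complex.re <|
    sum_congr rfl fun μ hμ => sum_congr rfl fun ν hν => ?_
  rw [hmoments μ hμ, hmoments ν hν]

/-- If the integral operator on `V_d` with kernel `Σ E_{μν} z^μ conj(ζ)^ν` is positive
definite on a nonempty bounded circled open set `Ω`, then the Hermitian matrix `E` is
positive definite. -/
theorem posdef_operator_implies_posdef_matrix
    {n : ℕ} (Ω : Set (Fin n → ℂ))
    (hΩopen : IsOpen Ω) (hΩne : Ω.Nonempty) (hΩbdd : Bornology.IsBounded Ω)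
    (hΩcircled : ∀ θ : ℝ, ∀ z ∈ Ω, (fun i => Complex.exp (θ * Complex.I) * z i) ∈ Ω)
    (d : ℕ) (E : (Fin n → ℕ) → (Fin n → ℕ) → ℂ)
    (hHerm : ∀ μ ∈ Finset.Nat.antidiagonalTuple n d, ∀ ν ∈ Finset.Nat.antidiagonalTuple n d,
      E ν μ = (starRingEnd ℂ) (E μ ν))
    (hPos : ∀ h : MvPolynomial (Fin n) ℂ, h.IsHomogeneous d → h ≠ 0 →
      0 < (∫ z in Ω, ∫ ζ in Ω,
        (∑ μ ∈ Finset.Nat.antidiagonalTuple n d, ∑ ν ∈ Finset.Nat.antidiagonalTuple n d,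
          E μ ν * (∏ i, z i ^ μ i) * (starRingEnd ℂ) (∏ i, ζ i ^ ν i))
          * eval ζ h * (starRingEnd ℂ) (eval z h)).re) :
    ∀ w : (Fin n → ℕ) → ℂ, (∃ μ ∈ Finset.Nat.antidiagonalTuple n d, w μ ≠ 0) →
      0 < (∑ μ ∈ Finset.Nat.antidiagonalTuple n d, ∑ ν ∈ Finset.Nat.antidiagonalTuple n d,
        E μ ν * w μ * (starRingEnd ℂ) (w ν)).re :=
  posdef_operator_implies_posdef_matrix_general Ω hΩopen hΩne hΩbdd d E hPos
end

section
/- Let H be a complex Hilbert space, let Q, T : H → H be bounded linear operators with T compact, and let c > 0 satisfy Re⟨Q h, h⟩ ≥ c ‖h‖² for all h ∈ H. Let (V_j)_{j ∈ ℕ} be a sequence of pairwise orthogonal closed subspaces of H. Then there exists j₀ such that for every j ≥ j₀ and every h ∈ V_j, Re⟨(Q + T) h, h⟩ ≥ (c/3) ‖h‖². -/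
/-!
By Bessel's inequality an orthonormal sequence `u k` tends weakly to `0`, and a compact operator
`T` turns this into `⟪T (u k), u k⟫ → 0`: along a subsequence `T (u k) → y`, and then
`⟪T (u k), u k⟫ = ⟪T (u k) - y, u k⟫ + ⟪y, u k⟫`. Normalising vectors taken from pairwise
orthogonal subspaces, `|⟪T h, h⟫| ≤ ε ‖h‖²` on `V j` for all large `j`, and with `ε = 2c/3`
the coercivity of `Q` absorbs `T`.
-/
open Filter Topology

section

variable {𝕜 E : Type*} [RCLike 𝕜] [NormedAddCommGroup E] [InnerProductSpace 𝕜 E]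

local notation "⟪" x ", " y "⟫" => inner 𝕜 x y

theorem Orthonormal.tendsto_inner_atTop_zero {u : ℕ → E} (hu : Orthonormal 𝕜 u) (y : E) :
    Tendsto (fun k => ⟪y, u k⟫) atTop (𝓝 0) := by
  have hsq : Tendsto (fun k => ‖⟪u k, y⟫‖ ^ 2) atTop (𝓝 0) :=
    (hu.inner_products_summable (x := y)).tendsto_atTop_zero
  rw [tendsto_zero_iff_norm_tendsto_zero]
  simpa [norm_inner_symm y, Real.sqrt_sq (norm_nonneg _)] using hsq.sqrt

theorem orthonormal_of_mem_of_pairwise_isOrtho {ι κ : Type*} {V : ι → Submodule 𝕜 E}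
    (hV : Pairwise (V · ⟂ V ·)) {φ : κ → ι} (hφ : Function.Injective φ) {u : κ → E}
    (hu : ∀ k, u k ∈ V (φ k)) (hnorm : ∀ k, ‖u k‖ = 1) : Orthonormal 𝕜 u :=
  ⟨hnorm, fun _ _ hkl => (hV (hφ.ne hkl)).inner_eq (hu _) (hu _)⟩

theorem ContinuousLinearMap.norm_inner_apply_smul_self (T : E →L[𝕜] E) (a : 𝕜) (h : E) :
    ‖⟪T (a • h), a • h⟫‖ = ‖a‖ ^ 2 * ‖⟪T h, h⟫‖ := by
  rw [map_smul, inner_smul_left, inner_smul_right, ← mul_assoc, RCLike.conj_mul]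
  simp [norm_mul]

theorem IsCompactOperator.tendsto_inner_apply_self_orthonormal {T : E →L[𝕜] E}
    (hT : IsCompactOperator T) {u : ℕ → E} (hu : Orthonormal 𝕜 u) :
    Tendsto (fun k => ⟪T (u k), u k⟫) atTop (𝓝 0) := by
  refine tendsto_of_subseq_tendsto fun ns hns => ?_
  obtain ⟨K, hK, hTK⟩ := hT.image_closedBall_subset_compact (f := (T : E →ₗ[𝕜] E)) 1
  have hmem : ∀ m, T (u (ns m)) ∈ K := fun m =>
    hTK ⟨u (ns m), by simp [(hu.1 _).le], rfl⟩
  obtain ⟨y, -, ψ, hψ, hlim⟩ := hK.tendsto_subseq hmem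
  refine ⟨ψ, ?_⟩
  have hsplit : ∀ m, ⟪T (u (ns (ψ m))), u (ns (ψ m))⟫
      = ⟪T (u (ns (ψ m))) - y, u (ns (ψ m))⟫ + ⟪y, u (ns (ψ m))⟫ := fun m => by
    rw [← inner_add_left, sub_add_cancel]
  have hfar : Tendsto (fun m => ⟪T (u (ns (ψ m))) - y, u (ns (ψ m))⟫) atTop (𝓝 0) := by
    refine squeeze_zero_norm (fun m => ?_) (tendsto_iff_norm_sub_tendsto_zero.1 hlim)
    simpa [hu.1] using norm_inner_le_norm (𝕜 := 𝕜) (T (u (ns (ψ m))) - y) (u (ns (ψ m)))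
  have hnear := (hu.tendsto_inner_atTop_zero y).comp (hns.comp hψ.tendsto_atTop)
  simpa [hsplit] using hfar.add hnear

theorem IsCompactOperator.eventually_norm_inner_apply_self_le {T : E →L[𝕜] E}
    (hT : IsCompactOperator T) {V : ℕ → Submodule 𝕜 E} (hV : Pairwise (V · ⟂ V ·))
    {ε : ℝ} (hε : 0 < ε) :
    ∀ᶠ j in atTop, ∀ h ∈ V j, ‖⟪T h, h⟫‖ ≤ ε * ‖h‖ ^ 2 := by
  by_contra hbad
  simp only [not_eventually, not_forall, not_le, exists_prop] at hbad
  obtain ⟨φ, hφ, hbad⟩ := extraction_of_frequently_atTop hbad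
  choose h hmem hlarge using hbad
  have hne : ∀ k, h k ≠ 0 := fun k hk => by simpa [hk] using hlarge k
  set u : ℕ → E := fun k => (‖h k‖⁻¹ : 𝕜) • h k
  have hu : Orthonormal 𝕜 u := orthonormal_of_mem_of_pairwise_isOrtho hV hφ.injective
    (fun k => (V (φ k)).smul_mem _ (hmem k)) (fun k => norm_smul_inv_norm (hne k))
  have hlarge_unit : ∀ k, ε < ‖⟪T (u k), u k⟫‖ := fun k => by
    have hpos : 0 < ‖h k‖ ^ 2 := by positivity [hne k]
    rw [T.norm_inner_apply_smul_self, norm_inv, RCLike.norm_ofReal, abs_norm, inv_pow,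
      lt_inv_mul_iff₀ hpos, mul_comm]
    exact hlarge k
  have hsmall := (hT.tendsto_inner_apply_self_orthonormal hu).norm
  rw [norm_zero] at hsmall
  obtain ⟨k, hk⟩ := (hsmall.eventually_lt_const hε).exists
  exact (hlarge_unit k).not_gt hk

end

theorem coercive_plus_compact_eventually_positive_general
    {H : Type*} [NormedAddCommGroup H] [InnerProductSpace ℂ H]
    (Q T : H →L[ℂ] H) (hT : IsCompactOperator T)
    (c : ℝ) (hc : 0 < c)
    (hQ : ∀ h : H, c * ‖h‖ ^ 2 ≤ (inner ℂ (Q h) h : ℂ).re)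
    (V : ℕ → Submodule ℂ H)
    (hVorth : ∀ i j, i ≠ j → ∀ u ∈ V i, ∀ v ∈ V j, (inner ℂ u v : ℂ) = 0) :
    ∃ j₀ : ℕ, ∀ j ≥ j₀, ∀ h ∈ V j,
      (c / 3) * ‖h‖ ^ 2 ≤ (inner ℂ ((Q + T) h) h : ℂ).re := by
  have hV : Pairwise (V · ⟂ V ·) := fun i j hij =>
    Submodule.isOrtho_iff_inner_eq.2 (hVorth i j hij)
  obtain ⟨j₀, hj₀⟩ := eventually_atTop.1
    (hT.eventually_norm_inner_apply_self_le hV (by positivity : 0 < 2 * c / 3))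
  refine ⟨j₀, fun j hj h hh => ?_⟩
  have hTh := (abs_le.1 ((Complex.abs_re_le_norm _).trans (hj₀ j hj h hh))).1
  rw [add_apply, inner_add_left, Complex.add_re]
  linarith [hQ h]

/-- A coercive operator plus a compact operator remains uniformly positive on the members
`V_j` of a sequence of pairwise orthogonal closed subspaces, for all sufficiently large `j`. -/
theorem coercive_plus_compact_eventually_positive
    {H : Type*} [NormedAddCommGroup H] [InnerProductSpace ℂ H] [CompleteSpace H]
    (Q T : H →L[ℂ] H) (hT : IsCompactOperator T)
    (c : ℝ) (hc : 0 < c)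
    (hQ : ∀ h : H, c * ‖h‖ ^ 2 ≤ (inner ℂ (Q h) h : ℂ).re)
    (V : ℕ → Submodule ℂ H) (hVclosed : ∀ j, IsClosed (V j : Set H))
    (hVorth : ∀ i j, i ≠ j → ∀ u ∈ V i, ∀ v ∈ V j, (inner ℂ u v : ℂ) = 0) :
    ∃ j₀ : ℕ, ∀ j ≥ j₀, ∀ h ∈ V j,
      (c / 3) * ‖h‖ ^ 2 ≤ (inner ℂ ((Q + T) h) h : ℂ).re :=
  coercive_plus_compact_eventually_positive_general Q T hT c hc hQ V hVorth
end
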